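/- arXiv:2006.00125 — 2 statements merged into one kernel-verified Lean document; each statement's English description precedes it below -/
import Mathlib

section
/- Let A ∈ ℝ^{n×n} and B ∈ ℝ^{n×m} with the column space of A contained in the column space of B. Let x_0 ∈ ℝⁿ and let (x_t) be the DGR closed-loop trajectory with α = 0. Then for every t with 1 ≤ t ≤ n, ‖x_t‖ ≤ M_t(A) ‖x_0‖. -/
/-!
Since `R(A) ⊆ R(B)`, `Π_{R(B)} A = A`, so the closed loop reads `x_{t+1} = A y_t` with the
residual `y_t = x_t - Π_{V_t} x_t`. Each `y_t` is orthogonal to `V_t` and lies in `V_{t+1}`, so the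
residuals are pairwise orthogonal, and `‖y_t‖ ≤ ‖x_t‖`. Writing `y_t = ‖y_t‖ v_t` with `v_t` a unit
vector gives `‖x_{t+1}‖ ≤ ‖A v_t‖ ‖x_t‖`, hence `‖x_t‖ ≤ ∏_{i<t} ‖A v_i‖ ‖x_0‖`, and the product
is at most `M_t(A)` because `(v_0, …, v_{t-1})` is orthonormal (or it vanishes, if some `y_i = 0`).
-/

open Matrix

noncomputable section

/-- The Euclidean norm on `Fin n → ℝ`. -/
def eucNorm {n : ℕ} (x : Fin n → ℝ) : ℝ := Real.sqrt (∑ i, (x i) ^ 2)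

/-- `P` is the matrix of the orthogonal projection of `ℝⁿ` onto the subspace `V`:
the unique symmetric idempotent matrix whose range is `V`. -/
def IsProjMatrix {n : ℕ} (P : Matrix (Fin n) (Fin n) ℝ) (V : Submodule ℝ (Fin n → ℝ)) : Prop :=
  P.IsSymm ∧ P * P = P ∧ LinearMap.range P.mulVecLin = V

/-- A real square matrix is Schur stable if every complex eigenvalue has modulus `< 1`,
i.e. its spectral radius is `< 1`. -/
def SchurStable {n : ℕ} (M : Matrix (Fin n) (Fin n) ℝ) : Prop :=
  ∀ (μ : ℂ) (v : Fin n → ℂ), v ≠ 0 →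
    (M.map (algebraMap ℝ ℂ)).mulVec v = μ • v → ‖μ‖ < 1

/-- The operator norm of a matrix induced by the Euclidean vector norm:
`‖M‖ = sup {‖M u‖ : ‖u‖ = 1}`. -/
def l2OpNorm {n m : ℕ} (M : Matrix (Fin n) (Fin m) ℝ) : ℝ :=
  sSup {c | ∃ x : Fin m → ℝ, eucNorm x = 1 ∧ c = eucNorm (M.mulVec x)}

/-- The instability number of order `t` of `A`:
`M_t(A) = sup { ∏ i ‖A v i‖ : (v 1, …, v t) orthonormal in ℝⁿ }`. -/
def instabilityNumber {n : ℕ} (A : Matrix (Fin n) (Fin n) ℝ) (t : ℕ) : ℝ :=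
  sSup {c | ∃ v : Fin t → (Fin n → ℝ),
    (∀ i j, v i ⬝ᵥ v j = if i = j then 1 else 0) ∧ c = ∏ i, eucNorm (A.mulVec (v i))}

lemma eucNorm_eq_sqrt_dotProduct {n : ℕ} (x : Fin n → ℝ) : eucNorm x = √(x ⬝ᵥ x) := by
  simp only [eucNorm, dotProduct, sq]

lemma eucNorm_eq_norm {n : ℕ} (x : Fin n → ℝ) :
    eucNorm x = ‖(WithLp.toLp 2 x : EuclideanSpace ℝ (Fin n))‖ := by
  simp only [eucNorm, EuclideanSpace.norm_eq, Real.norm_eq_abs, sq_abs]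

lemma eucNorm_nonneg {n : ℕ} (x : Fin n → ℝ) : 0 ≤ eucNorm x := Real.sqrt_nonneg _

lemma eucNorm_sq {n : ℕ} (x : Fin n → ℝ) : eucNorm x ^ 2 = x ⬝ᵥ x := by
  rw [eucNorm_eq_sqrt_dotProduct, Real.sq_sqrt (by simpa only [star_trivial] using dotProduct_star_self_nonneg x)]

@[simp]
lemma eucNorm_eq_zero {n : ℕ} {x : Fin n → ℝ} : eucNorm x = 0 ↔ x = 0 := by
  rw [eucNorm_eq_norm, norm_eq_zero, WithLp.toLp_eq_zero]

lemma eucNorm_smul {n : ℕ} (c : ℝ) (x : Fin n → ℝ) : eucNorm (c • x) = |c| * eucNorm x := by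
  rw [eucNorm_eq_norm, eucNorm_eq_norm, WithLp.toLp_smul, norm_smul, Real.norm_eq_abs]

lemma eucNorm_le_eucNorm_add {n : ℕ} {x y : Fin n → ℝ} (h : x ⬝ᵥ y = 0) :
    eucNorm x ≤ eucNorm (x + y) := by
  have hxy : inner ℝ (WithLp.toLp 2 x : EuclideanSpace ℝ (Fin n)) (WithLp.toLp 2 y) = 0 := by
    rwa [EuclideanSpace.inner_toLp_toLp, star_trivial, dotProduct_comm]
  have hpyth := norm_add_sq_eq_norm_sq_add_norm_sq_of_inner_eq_zero _ _ hxy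
  rw [← WithLp.toLp_add, ← eucNorm_eq_norm, ← eucNorm_eq_norm, ← eucNorm_eq_norm] at hpyth
  nlinarith [eucNorm_nonneg x, eucNorm_nonneg y, eucNorm_nonneg (x + y)]

lemma eucNorm_mulVec_le {n : ℕ} (A : Matrix (Fin n) (Fin n) ℝ) (x : Fin n → ℝ) :
    eucNorm (A *ᵥ x) ≤ ‖toEuclideanCLM (n := Fin n) (𝕜 := ℝ) A‖ * eucNorm x := by
  rw [eucNorm_eq_norm, eucNorm_eq_norm, ← toEuclideanCLM_toLp]
  exact ContinuousLinearMap.le_opNorm _ _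

/-- Where `‖y‖ = 0` the inverse is `0`, and both sides vanish. -/
lemma eucNorm_mulVec_eq_mul_normalized {n : ℕ} (A : Matrix (Fin n) (Fin n) ℝ)
    (y : Fin n → ℝ) : eucNorm (A *ᵥ y) = eucNorm y * eucNorm (A *ᵥ (eucNorm y)⁻¹ • y) := by
  rcases eq_or_ne (eucNorm y) 0 with hy | hy
  · simp [eucNorm_eq_zero.mp hy, eucNorm]
  · rw [mulVec_smul, eucNorm_smul, abs_of_nonneg (inv_nonneg.mpr (eucNorm_nonneg y)),
      mul_inv_cancel_left₀ hy]

lemma dotProduct_normalized_eq_ite {n t : ℕ} {y : Fin t → Fin n → ℝ}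
    (horth : Pairwise fun i j => y i ⬝ᵥ y j = 0) (hy : ∀ i, y i ≠ 0) (i j : Fin t) :
    (eucNorm (y i))⁻¹ • y i ⬝ᵥ (eucNorm (y j))⁻¹ • y j = if i = j then 1 else 0 := by
  rw [smul_dotProduct, dotProduct_smul, smul_eq_mul, smul_eq_mul]
  split_ifs with hij
  · subst hij
    have hne : eucNorm (y i) ≠ 0 := mt eucNorm_eq_zero.mp (hy i)
    rw [← eucNorm_sq]
    field_simp
  · rw [horth hij, mul_zero, mul_zero]

section InstabilityNumber

variable {n : ℕ} (A : Matrix (Fin n) (Fin n) ℝ) (t : ℕ)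

lemma bddAbove_instabilityNumber :
    BddAbove {c | ∃ v : Fin t → (Fin n → ℝ),
      (∀ i j, v i ⬝ᵥ v j = if i = j then 1 else 0) ∧ c = ∏ i, eucNorm (A *ᵥ v i)} := by
  refine ⟨‖toEuclideanCLM (n := Fin n) (𝕜 := ℝ) A‖ ^ t, ?_⟩
  rintro c ⟨v, hv, rfl⟩
  have hunit : ∀ i, eucNorm (v i) = 1 := fun i => by
    rw [eucNorm_eq_sqrt_dotProduct, hv, if_pos rfl, Real.sqrt_one]
  calc ∏ i, eucNorm (A *ᵥ v i)
      ≤ ∏ _i : Fin t, ‖toEuclideanCLM (n := Fin n) (𝕜 := ℝ) A‖ :=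
        Finset.prod_le_prod (fun i _ => eucNorm_nonneg _)
          (fun i _ => (eucNorm_mulVec_le A (v i)).trans_eq (by rw [hunit, mul_one]))
    _ = _ := by rw [Finset.prod_const, Finset.card_univ, Fintype.card_fin]

lemma instabilityNumber_nonneg : 0 ≤ instabilityNumber A t :=
  Real.sSup_nonneg <| by
    rintro c ⟨v, -, rfl⟩
    exact Finset.prod_nonneg fun i _ => eucNorm_nonneg _

variable {A t}

lemma prod_eucNorm_mulVec_le_instabilityNumber {v : Fin t → Fin n → ℝ}
    (hv : ∀ i j, v i ⬝ᵥ v j = if i = j then 1 else 0) :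
    ∏ i, eucNorm (A *ᵥ v i) ≤ instabilityNumber A t :=
  le_csSup (bddAbove_instabilityNumber A t) ⟨v, hv, rfl⟩

lemma prod_eucNorm_mulVec_normalized_le_instabilityNumber {y : Fin t → Fin n → ℝ}
    (horth : Pairwise fun i j => y i ⬝ᵥ y j = 0) :
    ∏ i, eucNorm (A *ᵥ (eucNorm (y i))⁻¹ • y i) ≤ instabilityNumber A t := by
  by_cases hy : ∀ i, y i ≠ 0
  · exact prod_eucNorm_mulVec_le_instabilityNumber (dotProduct_normalized_eq_ite horth hy)
  · push Not at hy
    obtain ⟨i, hi⟩ := hy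
    rw [Finset.prod_eq_zero (Finset.mem_univ i) (by simp [hi])]
    exact instabilityNumber_nonneg A t

end InstabilityNumber

lemma le_prod_range_mul_of_le_mul {a c : ℕ → ℝ} (hc : ∀ s, 0 ≤ c s)
    (h : ∀ s, a (s + 1) ≤ c s * a s) (t : ℕ) : a t ≤ (∏ i ∈ Finset.range t, c i) * a 0 := by
  induction t with
  | zero => simp
  | succ t ih =>
    rw [Finset.prod_range_succ, mul_comm _ (c t), mul_assoc]
    exact (h t).trans (mul_le_mul_of_nonneg_left ih (hc t))

theorem eucNorm_le_instabilityNumber_mul {n : ℕ} {A : Matrix (Fin n) (Fin n) ℝ}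
    {x y : ℕ → Fin n → ℝ} (horth : Pairwise fun i j => y i ⬝ᵥ y j = 0)
    (hstep : ∀ s, x (s + 1) = A *ᵥ y s) (hy : ∀ s, eucNorm (y s) ≤ eucNorm (x s)) (t : ℕ) :
    eucNorm (x t) ≤ instabilityNumber A t * eucNorm (x 0) := by
  set c : ℕ → ℝ := fun i => eucNorm (A *ᵥ (eucNorm (y i))⁻¹ • y i)
  have hc : ∀ s, 0 ≤ c s := fun s => eucNorm_nonneg _
  have hgrowth : ∀ s, eucNorm (x (s + 1)) ≤ c s * eucNorm (x s) := fun s => by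
    rw [hstep, eucNorm_mulVec_eq_mul_normalized, mul_comm]
    exact mul_le_mul_of_nonneg_left (hy s) (hc s)
  have hprod : ∏ i ∈ Finset.range t, c i ≤ instabilityNumber A t := by
    rw [← Fin.prod_univ_eq_prod_range]
    exact prod_eucNorm_mulVec_normalized_le_instabilityNumber
      fun i j hij => horth (Fin.val_injective.ne hij)
  calc eucNorm (x t) ≤ (∏ i ∈ Finset.range t, c i) * eucNorm (x 0) :=
        le_prod_range_mul_of_le_mul (a := fun s => eucNorm (x s)) hc hgrowth t
    _ ≤ instabilityNumber A t * eucNorm (x 0) :=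
        mul_le_mul_of_nonneg_right hprod (eucNorm_nonneg _)

namespace IsProjMatrix

variable {n : ℕ} {P : Matrix (Fin n) (Fin n) ℝ} {V : Submodule ℝ (Fin n → ℝ)}

lemma mulVec_mem (hP : IsProjMatrix P V) (z : Fin n → ℝ) : P *ᵥ z ∈ V :=
  hP.2.2 ▸ ⟨z, rfl⟩

lemma mulVec_of_mem (hP : IsProjMatrix P V) {w : Fin n → ℝ} (hw : w ∈ V) : P *ᵥ w = w := by
  rw [← hP.2.2] at hw
  obtain ⟨u, rfl⟩ := hw
  rw [mulVecLin_apply, mulVec_mulVec, hP.2.1]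

lemma sub_mulVec_dotProduct_eq_zero (hP : IsProjMatrix P V) (z : Fin n → ℝ)
    {w : Fin n → ℝ} (hw : w ∈ V) : (z - P *ᵥ z) ⬝ᵥ w = 0 := by
  have hself_adjoint : ∀ u v : Fin n → ℝ, u ⬝ᵥ P *ᵥ v = P *ᵥ u ⬝ᵥ v := fun u v => by
    rw [dotProduct_mulVec, ← mulVec_transpose, hP.1.eq]
  rw [sub_dotProduct, ← mulVec_of_mem hP hw, hself_adjoint, hself_adjoint, mulVec_mulVec,
    hP.2.1, sub_self]

lemma eucNorm_sub_mulVec_le (hP : IsProjMatrix P V) (z : Fin n → ℝ) :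
    eucNorm (z - P *ᵥ z) ≤ eucNorm z := by
  simpa using eucNorm_le_eucNorm_add (sub_mulVec_dotProduct_eq_zero hP z (mulVec_mem hP z))

end IsProjMatrix

section Trajectory

variable {n : ℕ} {x : ℕ → Fin n → ℝ} {Pv : ℕ → Matrix (Fin n) (Fin n) ℝ}

/-- The subspace `V_t = span {x 0, …, x (t-1)}`. -/
def pastSpan (x : ℕ → Fin n → ℝ) (t : ℕ) : Submodule ℝ (Fin n → ℝ) :=
  Submodule.span ℝ (Set.range fun i : Fin t => x i.val)

lemma pastSpan_mono : Monotone (pastSpan x) := fun _ _ hst =>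
  Submodule.span_mono <| by
    rintro _ ⟨i, rfl⟩
    exact ⟨Fin.castLE hst i, rfl⟩

lemma mem_pastSpan_succ (t : ℕ) : x t ∈ pastSpan x (t + 1) :=
  Submodule.subset_span ⟨Fin.last t, rfl⟩

variable (hPv : ∀ t, IsProjMatrix (Pv t) (pastSpan x t))
include hPv

lemma residual_mem_pastSpan_succ (t : ℕ) : x t - Pv t *ᵥ x t ∈ pastSpan x (t + 1) :=
  Submodule.sub_mem _ (mem_pastSpan_succ t)
    (pastSpan_mono t.le_succ ((hPv t).mulVec_mem (x t)))

lemma pairwise_residual_dotProduct_eq_zero :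
    Pairwise fun i j => (x i - Pv i *ᵥ x i) ⬝ᵥ (x j - Pv j *ᵥ x j) = 0 := by
  have hlt : ∀ i j, j < i → (x i - Pv i *ᵥ x i) ⬝ᵥ (x j - Pv j *ᵥ x j) = 0 := fun i j hji =>
    (hPv i).sub_mulVec_dotProduct_eq_zero (x i)
      (pastSpan_mono hji (residual_mem_pastSpan_succ hPv j))
  intro i j hij
  rcases hij.lt_or_gt with h | h
  · rw [dotProduct_comm]; exact hlt j i h
  · exact hlt i j h

end Trajectory

/-- When `R(A) ⊆ R(B)`, the DGR trajectory is bounded by the instability number. -/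
theorem stmt12 {n m : ℕ} (A : Matrix (Fin n) (Fin n) ℝ) (B : Matrix (Fin n) (Fin m) ℝ)
    (hcol : LinearMap.range A.mulVecLin ≤ LinearMap.range B.mulVecLin)
    (PB : Matrix (Fin n) (Fin n) ℝ)
    (hPB : IsProjMatrix PB (LinearMap.range B.mulVecLin))
    (x : ℕ → Fin n → ℝ)
    (Pv : ℕ → Matrix (Fin n) (Fin n) ℝ)
    (hPv : ∀ t, IsProjMatrix (Pv t)
      (Submodule.span ℝ (Set.range fun i : Fin t => x i.val)))
    (hdyn : ∀ t, x (t + 1) = A.mulVec (x t) - (PB * A).mulVec ((Pv t).mulVec (x t))) :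
    ∀ t, 1 ≤ t → t ≤ n → eucNorm (x t) ≤ instabilityNumber A t * eucNorm (x 0) := by
  have hPBA : ∀ v, PB *ᵥ (A *ᵥ v) = A *ᵥ v := fun v => hPB.mulVec_of_mem (hcol ⟨v, rfl⟩)
  have hstep : ∀ t, x (t + 1) = A *ᵥ (x t - Pv t *ᵥ x t) := fun t => by
    rw [hdyn, ← mulVec_mulVec, hPBA, mulVec_sub]
  intro t _ _
  exact eucNorm_le_instabilityNumber_mul (pairwise_residual_dotProduct_eq_zero hPv) hstep
    (fun s => (hPv s).eucNorm_sub_mulVec_le (x s)) t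
end
end

section
/- Let A ∈ ℝ^{n×n} with operator norm ‖A‖ = σ_1 (the largest singular value of A). Then for every t with 1 ≤ t ≤ n, M_t(A)² ≥ (σ_1²/t)^t; equivalently M_t(A) ≥ (σ_1/√t)^t. -/
/-! A unit vector `u` maximising `‖A x‖` on the unit sphere is an eigenvector of `AᵀA`, so `A`
maps `u⊥` into `(A u)⊥` and therefore `‖A v‖ ≥ |⟪v, u⟫| σ₁` for every `v`. The reflection carrying
`(e₁ + ⋯ + e_t)/√t` to `u` turns `e₁, …, e_t` into an orthonormal family `v₁, …, v_t` with
`⟪vᵢ, u⟫ = 1/√t` for every `i`, whence `∏ ‖A vᵢ‖ ≥ (σ₁/√t)^t`. -/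

open Matrix

noncomputable section

open scoped RealInnerProductSpace
open Module WithLp

section
variable {E F : Type*} [NormedAddCommGroup E] [InnerProductSpace ℝ E]
  [NormedAddCommGroup F] [InnerProductSpace ℝ F]

theorem abs_inner_mul_norm_le_norm_apply (T : E →ₗ[ℝ] F) {u : E} (hu : ‖u‖ = 1)
    (horth : ∀ w, ⟪w, u⟫ = 0 → ⟪T u, T w⟫ = 0) (v : E) :
    |⟪v, u⟫| * ‖T u‖ ≤ ‖T v‖ := by
  set a := ⟪v, u⟫
  have hw : ⟪v - a • u, u⟫ = 0 := by
    rw [inner_sub_left, real_inner_smul_left, real_inner_self_eq_norm_sq, hu]; ring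
  have hTv : T v = a • T u + T (v - a • u) := by simp
  have hsq : (|a| * ‖T u‖) ^ 2 ≤ ‖T v‖ ^ 2 := by
    rw [hTv, norm_add_sq_real, real_inner_smul_left, horth _ hw, norm_smul, Real.norm_eq_abs]
    nlinarith [sq_nonneg ‖T (v - a • u)‖]
  exact (pow_le_pow_iff_left₀ (by positivity) (norm_nonneg _) two_ne_zero).1 hsq

theorem inner_apply_eq_zero_of_isMaxOn [CompleteSpace E] [CompleteSpace F] (T : E →L[ℝ] F)
    {u : E} (hu : ‖u‖ = 1) (hmax : IsMaxOn (fun x => ‖T x‖) (Metric.sphere 0 1) u) {w : E}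
    (hw : ⟪w, u⟫ = 0) : ⟪T u, T w⟫ = 0 := by
  set S := T.adjoint ∘L T
  have hS : ∀ x, S.reApplyInnerSelf x = ‖T x‖ ^ 2 := fun x => by
    rw [S.reApplyInnerSelf_apply, RCLike.re_to_real, ContinuousLinearMap.comp_apply,
      ContinuousLinearMap.adjoint_inner_left, real_inner_self_eq_norm_sq]
  have hSmax : IsMaxOn S.reApplyInnerSelf (Metric.sphere 0 ‖u‖) u := by
    rw [hu]
    intro x hx
    simp only [Set.mem_ofPred_eq, hS]
    exact pow_le_pow_left₀ (norm_nonneg _) (hmax hx) 2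
  have heig := (T.isPositive_adjoint_comp_self.isSelfAdjoint).eq_smul_self_of_isLocalExtrOn_real
    (.inr hSmax.localize)
  rw [← ContinuousLinearMap.adjoint_inner_left, ← ContinuousLinearMap.comp_apply, heig,
    real_inner_smul_left, real_inner_comm, hw, mul_zero]

theorem exists_orthonormal_inner_eq_inv_sqrt [FiniteDimensional ℝ E] {t : ℕ} (ht : 0 < t)
    (htE : t ≤ finrank ℝ E) {u : E} (hu : ‖u‖ = 1) :
    ∃ v : Fin t → E, Orthonormal ℝ v ∧ ∀ i, ⟪v i, u⟫ = (√t)⁻¹ := by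
  set w : Fin t → E := fun i => stdOrthonormalBasis ℝ E (Fin.castLE htE i)
  have hw : Orthonormal ℝ w :=
    (stdOrthonormalBasis ℝ E).orthonormal.comp _ (Fin.castLE_injective htE)
  set s : E := ∑ i, (√t)⁻¹ • w i
  have hws : ∀ i, ⟪w i, s⟫ = (√t)⁻¹ := fun i => hw.inner_right_fintype _ i
  have hs : ‖s‖ = 1 := by
    have ht0 : (0 : ℝ) < t := by exact_mod_cast ht
    rw [← pow_eq_one_iff_of_nonneg (norm_nonneg s) two_ne_zero, ← real_inner_self_eq_norm_sq,
      show ⟪s, s⟫ = ⟪∑ i, (√t)⁻¹ • w i, s⟫ from rfl, sum_inner]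
    simp only [real_inner_smul_left, hws, Finset.sum_const, Finset.card_univ, Fintype.card_fin,
      nsmul_eq_mul]
    field_simp
    rw [Real.sq_sqrt ht0.le]
  set R := Submodule.reflection (ℝ ∙ (s - u))ᗮ
  refine ⟨fun i => R (w i), hw.comp_linearIsometryEquiv R, fun i => ?_⟩
  rw [← Submodule.reflection_sub (hs.trans hu.symm), LinearIsometryEquiv.inner_map_map, hws]
end

section
variable {n : ℕ}

lemma eucNorm_eq_norm_toLp (x : Fin n → ℝ) : eucNorm x = ‖toLp 2 x‖ := by
  simp [eucNorm, EuclideanSpace.norm_eq]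

lemma dotProduct_eq_inner_toLp (x y : Fin n → ℝ) : x ⬝ᵥ y = ⟪toLp 2 x, toLp 2 y⟫ := by
  simp [EuclideanSpace.inner_toLp_toLp, dotProduct_comm]

lemma l2OpNorm_nonneg {m : ℕ} (M : Matrix (Fin n) (Fin m) ℝ) : 0 ≤ l2OpNorm M :=
  Real.sSup_nonneg fun _ ⟨_, _, hc⟩ => hc ▸ Real.sqrt_nonneg _

lemma l2OpNorm_le_of_isMaxOn (A : Matrix (Fin n) (Fin n) ℝ) {u : EuclideanSpace ℝ (Fin n)}
    (hu : ‖u‖ = 1) (hmax : IsMaxOn (fun x => ‖toEuclideanCLM (𝕜 := ℝ) A x‖) (Metric.sphere 0 1) u) :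
    l2OpNorm A ≤ ‖toEuclideanCLM (𝕜 := ℝ) A u‖ := by
  refine csSup_le ⟨_, ofLp u, by rw [eucNorm_eq_norm_toLp, toLp_ofLp, hu], rfl⟩ ?_
  rintro _ ⟨x, hx, rfl⟩
  rw [eucNorm_eq_norm_toLp] at hx ⊢
  exact hmax (mem_sphere_zero_iff_norm.2 hx)

lemma prod_norm_le_instabilityNumber (A : Matrix (Fin n) (Fin n) ℝ) {t : ℕ}
    {v : Fin t → EuclideanSpace ℝ (Fin n)} (hv : Orthonormal ℝ v) :
    ∏ i, ‖toEuclideanCLM (𝕜 := ℝ) A (v i)‖ ≤ instabilityNumber A t := by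
  set T := toEuclideanCLM (𝕜 := ℝ) A
  have hbdd : ∀ w : Fin t → (Fin n → ℝ), (∀ i j, w i ⬝ᵥ w j = if i = j then 1 else 0) →
      ∏ i, eucNorm (A *ᵥ w i) ≤ ‖T‖ ^ t := by
    intro w hw
    have hw1 : ∀ i, ‖toLp 2 (w i)‖ = 1 := fun i => by
      rw [← pow_eq_one_iff_of_nonneg (norm_nonneg _) two_ne_zero, ← real_inner_self_eq_norm_sq,
        ← dotProduct_eq_inner_toLp, hw, if_pos rfl]
    calc ∏ i, eucNorm (A *ᵥ w i) ≤ ∏ _i : Fin t, ‖T‖ := by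
          refine Finset.prod_le_prod (fun i _ => Real.sqrt_nonneg _) fun i _ => ?_
          rw [eucNorm_eq_norm_toLp]
          exact (T.le_opNorm (toLp 2 (w i))).trans_eq (by rw [hw1, mul_one])
      _ = ‖T‖ ^ t := by simp
  refine le_csSup ⟨_, fun _ ⟨w, hw, hc⟩ => hc ▸ hbdd w hw⟩ ⟨fun i => ofLp (v i), fun i j => ?_, ?_⟩
  · rw [dotProduct_eq_inner_toLp, toLp_ofLp, toLp_ofLp]
    exact orthonormal_iff_ite.1 hv i j
  · simp_rw [eucNorm_eq_norm_toLp]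
    rfl
end

/-- Lower bound on the instability number: `M_t(A) ≥ (σ₁/√t)^t`. -/
theorem stmt13 {n : ℕ} (A : Matrix (Fin n) (Fin n) ℝ) (σ1 : ℝ) (hσ1 : σ1 = l2OpNorm A) :
    ∀ t, 1 ≤ t → t ≤ n →
      (σ1 ^ 2 / (t : ℝ)) ^ t ≤ instabilityNumber A t ^ 2 ∧
      (σ1 / Real.sqrt (t : ℝ)) ^ t ≤ instabilityNumber A t := by
  intro t ht htn
  subst hσ1
  set T := toEuclideanCLM (𝕜 := ℝ) A
  have : Nonempty (Fin n) := ⟨⟨0, by omega⟩⟩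
  obtain ⟨u, hu, hmax⟩ := (isCompact_sphere (0 : EuclideanSpace ℝ (Fin n)) 1).exists_isMaxOn
    (NormedSpace.sphere_nonempty.2 zero_le_one) (map_continuous T).norm.continuousOn
  rw [mem_sphere_zero_iff_norm] at hu
  obtain ⟨v, hv, hvu⟩ := exists_orthonormal_inner_eq_inv_sqrt ht (by simpa using htn) hu
  have hTv : ∀ i, l2OpNorm A / √t ≤ ‖T (v i)‖ := fun i => by
    have := abs_inner_mul_norm_le_norm_apply T.toLinearMap hu
      (fun w hw => inner_apply_eq_zero_of_isMaxOn T hu hmax hw) (v i)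
    rw [hvu, abs_of_pos (by positivity), inv_mul_eq_div] at this
    exact (div_le_div_of_nonneg_right (l2OpNorm_le_of_isMaxOn A hu hmax) (by positivity)).trans this
  have hσ : 0 ≤ l2OpNorm A / √t := div_nonneg (l2OpNorm_nonneg A) (Real.sqrt_nonneg t)
  have hM : (l2OpNorm A / √t) ^ t ≤ instabilityNumber A t := calc
    (l2OpNorm A / √t) ^ t = ∏ _i : Fin t, l2OpNorm A / √t := (Fin.prod_const t _).symm
    _ ≤ ∏ i, ‖T (v i)‖ := Finset.prod_le_prod (fun _ _ => hσ) fun i _ => hTv i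
    _ ≤ instabilityNumber A t := prod_norm_le_instabilityNumber A hv
  refine ⟨?_, hM⟩
  calc (l2OpNorm A ^ 2 / t) ^ t = ((l2OpNorm A / √t) ^ t) ^ 2 := by
        rw [← pow_mul, mul_comm t 2, pow_mul, div_pow (l2OpNorm A),
          Real.sq_sqrt (Nat.cast_nonneg t)]
    _ ≤ instabilityNumber A t ^ 2 := pow_le_pow_left₀ (pow_nonneg hσ t) hM 2
end
end
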